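/- arXiv:2002.03767 — 3 statements merged into one kernel-verified Lean document; each statement's English description precedes it below -/
import Mathlib

section
/- For any positive function f on V supported on a set of volume at most vol(V)/2 (i.e., vol({i : f(i) > 0}) ≤ vol(V)/2), one has β · Σ_i f(i) μ_i ≤ (1/2) Σ_{i,j} w_{ij} |f(i) − f(j)|, where β is the isoperimetric constant. -/
open Finset

/-- For a nonnegative function supported on a set of volume at most half the total,
`β · ∫ f dμ ≤ (1/2) Σ_{i,j} w_{ij} |f(i) − f(j)|`. -/
theorem isoperimetric_coarea_bound {V : Type*} [Fintype V] [DecidableEq V]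
    (μ : V → ℝ) (hμ : ∀ i, 0 < μ i)
    (w : V → V → ℝ) (hw0 : ∀ i j, 0 ≤ w i j)
    (hsym : ∀ i j, w i j = w j i) (hdiag : ∀ i, w i i = 0)
    (β : ℝ)
    (hβ : IsLeast {x : ℝ | ∃ A : Finset V, A.Nonempty ∧ A ≠ Finset.univ ∧
      (∑ i ∈ A, μ i) ≤ (∑ i, μ i) / 2 ∧
      x = (∑ i ∈ A, ∑ j ∈ Finset.univ \ A, w i j) / (∑ i ∈ A, μ i)} β)
    (f : V → ℝ) (hf : ∀ i, 0 ≤ f i)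
    (hsupp : (∑ i ∈ Finset.univ.filter (fun i => 0 < f i), μ i) ≤ (∑ i, μ i) / 2) :
    β * ∑ i, f i * μ i ≤ (1 / 2) * ∑ i, ∑ j, w i j * |f i - f j| := by
  suffices H : ∀ n : ℕ, ∀ f : V → ℝ, (∀ i, 0 ≤ f i) →
      (Finset.univ.image f).card ≤ n →
      (∑ i ∈ Finset.univ.filter (fun i => 0 < f i), μ i) ≤ (∑ i, μ i) / 2 →
      β * ∑ i, f i * μ i ≤ (1 / 2) * ∑ i, ∑ j, w i j * |f i - f j| by
    exact H _ f hf le_rfl hsupp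
  intro n
  induction n with
  | zero =>
    intro f hf hcard _
    have : (Finset.univ.image f) = ∅ := Finset.card_eq_zero.mp (Nat.le_zero.mp hcard)
    have hVempty : (Finset.univ : Finset V) = ∅ := by
      by_contra h
      obtain ⟨i, hi⟩ := Finset.nonempty_iff_ne_empty.mpr h
      exact absurd (Finset.mem_image_of_mem f hi) (by simp [this])
    simp [hVempty]
  | succ n IH =>
    intro f hf hcard hsupp
    by_cases hzero : ∀ i, f i = 0
    · have h1 : ∑ i, f i * μ i = 0 := by
        apply Finset.sum_eq_zero; intro i _; rw [hzero i]; ring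
      rw [h1, mul_zero]
      apply mul_nonneg (by norm_num)
      apply Finset.sum_nonneg; intro i _
      apply Finset.sum_nonneg; intro j _
      exact mul_nonneg (hw0 i j) (abs_nonneg _)
    · push_neg at hzero
      obtain ⟨i₀, hi₀⟩ := hzero
      have hi₀pos : 0 < f i₀ := lt_of_le_of_ne (hf i₀) (Ne.symm hi₀)
      have hVne : (Finset.univ : Finset V).Nonempty := ⟨i₀, Finset.mem_univ i₀⟩
      set m : ℝ := Finset.univ.sup' hVne f with hm_def
      have hm : ∀ i, f i ≤ m := fun i => Finset.le_sup' f (Finset.mem_univ i)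
      have hmpos : 0 < m := lt_of_lt_of_le hi₀pos (hm i₀)
      set A : Finset V := Finset.univ.filter (fun i => m ≤ f i) with hA_def
      obtain ⟨i₁, _, hi₁⟩ := Finset.exists_mem_eq_sup' hVne f
      have hAne : A.Nonempty := ⟨i₁, Finset.mem_filter.mpr ⟨Finset.mem_univ _, le_of_eq (hm_def.trans hi₁)⟩⟩
      have hfA : ∀ i ∈ A, f i = m := by
        intro i hi
        exact le_antisymm (hm i) (Finset.mem_filter.mp hi).2
      have hAsub : A ⊆ Finset.univ.filter (fun i => 0 < f i) := by
        intro i hi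
        simp only [Finset.mem_filter, Finset.mem_univ, true_and]
        have := (Finset.mem_filter.mp hi).2
        linarith
      have hvolA_le : (∑ i ∈ A, μ i) ≤ (∑ i, μ i) / 2 := by
        refine le_trans (Finset.sum_le_sum_of_subset_of_nonneg hAsub ?_) hsupp
        intro i _ _; exact (hμ i).le
      have hvolA_pos : 0 < ∑ i ∈ A, μ i :=
        Finset.sum_pos (fun i _ => hμ i) hAne
      have htot_pos : 0 < ∑ i, μ i := Finset.sum_pos (fun i _ => hμ i) hVne
      have hAne_univ : A ≠ Finset.univ := by
        intro h
        rw [h] at hvolA_le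
        linarith
      have hBne : (Finset.univ \ A).Nonempty := by
        rw [Finset.sdiff_nonempty]
        intro h
        exact hAne_univ (Finset.univ_subset_iff.mp h)
      set s : ℝ := (Finset.univ \ A).sup' hBne f with hs_def
      have hfB : ∀ i, i ∉ A → f i ≤ s := by
        intro i hi
        exact Finset.le_sup' f (Finset.mem_sdiff.mpr ⟨Finset.mem_univ i, hi⟩)
      have hs_lt : s < m := by
        rw [hs_def, Finset.sup'_lt_iff]
        intro j hj
        have hj' : j ∉ A := (Finset.mem_sdiff.mp hj).2
        have : ¬ m ≤ f j := by
          intro h; exact hj' (Finset.mem_filter.mpr ⟨Finset.mem_univ j, h⟩)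
        linarith
      obtain ⟨j₂, hj₂mem, hj₂⟩ := Finset.exists_mem_eq_sup' hBne f
      have hs0 : 0 ≤ s := by rw [hs_def, hj₂]; exact hf j₂
      set g : V → ℝ := fun i => if m ≤ f i then s else f i with hg_def
      have hg0 : ∀ i, 0 ≤ g i := by
        intro i; simp only [hg_def]; split
        · exact hs0
        · exact hf i
      -- pointwise identity
      have habs : ∀ i j, |f i - f j| = |g i - g j| +
          (m - s) * |(if m ≤ f i then (1:ℝ) else 0) - (if m ≤ f j then (1:ℝ) else 0)| := by
        intro i j
        by_cases hi : m ≤ f i <;> by_cases hj : m ≤ f j <;>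
          simp only [hg_def, hi, hj, if_true, if_false]
        · have h1 : f i = m := le_antisymm (hm i) hi
          have h2 : f j = m := le_antisymm (hm j) hj
          rw [h1, h2]; simp
        · have hfi : f i = m := le_antisymm (hm i) hi
          have hfj : f j ≤ s := hfB j (by simp [hA_def, hj])
          rw [abs_of_nonneg (by linarith), abs_of_nonneg (by linarith),
            show |(1:ℝ) - 0| = 1 by norm_num]
          linarith
        · have hfj : f j = m := le_antisymm (hm j) hj
          have hfi : f i ≤ s := hfB i (by simp [hA_def, hi])
          rw [abs_of_nonpos (by linarith), abs_of_nonpos (by linarith),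
            show |(0:ℝ) - 1| = 1 by norm_num]
          linarith
        · simp
      -- card of image of g
      have hgimage : Finset.univ.image g ⊆ (Finset.univ.image f).erase m := by
        intro x hx
        obtain ⟨i, _, rfl⟩ := Finset.mem_image.mp hx
        by_cases hi : m ≤ f i
        · simp only [hg_def, hi, if_true]
          exact Finset.mem_erase.mpr ⟨ne_of_lt hs_lt, Finset.mem_image.mpr ⟨j₂, Finset.mem_univ j₂, hj₂.symm⟩⟩
        · simp only [hg_def, hi, if_false]
          exact Finset.mem_erase.mpr ⟨by intro h; exact hi (le_of_eq h.symm),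
            Finset.mem_image_of_mem f (Finset.mem_univ i)⟩
      have hm_mem : m ∈ Finset.univ.image f :=
        Finset.mem_image.mpr ⟨i₁, Finset.mem_univ i₁, hi₁.symm⟩
      have hgcard : (Finset.univ.image g).card ≤ n := by
        have h1 := Finset.card_le_card hgimage
        rw [Finset.card_erase_of_mem hm_mem] at h1
        omega
      -- support of g
      have hgsupp : (∑ i ∈ Finset.univ.filter (fun i => 0 < g i), μ i) ≤ (∑ i, μ i) / 2 := by
        refine le_trans (Finset.sum_le_sum_of_subset_of_nonneg ?_ (fun i _ _ => (hμ i).le)) hsupp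
        intro i hi
        simp only [Finset.mem_filter, Finset.mem_univ, true_and] at hi ⊢
        by_cases h : m ≤ f i
        · linarith
        · simp only [hg_def, h, if_false] at hi; exact hi
      have ihg := IH g hg0 hgcard hgsupp
      -- decomposition of the integral
      have hsum_f : ∑ i, f i * μ i = (∑ i, g i * μ i) + (m - s) * ∑ i ∈ A, μ i := by
        have : ∀ i, f i * μ i = g i * μ i + (if m ≤ f i then (m - s) * μ i else 0) := by
          intro i
          by_cases hi : m ≤ f i
          · have hfi : f i = m := le_antisymm (hm i) hi
            simp only [hg_def, hfi, if_pos (le_refl m)]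
            ring
          · simp [hg_def, hi]
        rw [Finset.sum_congr rfl (fun i _ => this i), Finset.sum_add_distrib]
        congr 1
        rw [hA_def, Finset.mul_sum, Finset.sum_filter]
      -- the isoperimetric inequality for A
      have hβA : β * (∑ i ∈ A, μ i) ≤ ∑ i ∈ A, ∑ j ∈ Finset.univ \ A, w i j := by
        calc β * (∑ i ∈ A, μ i)
            ≤ ((∑ i ∈ A, ∑ j ∈ Finset.univ \ A, w i j) / (∑ i ∈ A, μ i)) * (∑ i ∈ A, μ i) := by
              apply mul_le_mul_of_nonneg_right (hβ.2 ⟨A, hAne, hAne_univ, hvolA_le, rfl⟩) hvolA_pos.le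
          _ = ∑ i ∈ A, ∑ j ∈ Finset.univ \ A, w i j :=
              div_mul_cancel₀ _ (ne_of_gt hvolA_pos)
      -- boundary sum identity
      have hbdry : ∑ i, ∑ j, w i j * |(if m ≤ f i then (1:ℝ) else 0) - (if m ≤ f j then (1:ℝ) else 0)|
          = 2 * ∑ i ∈ A, ∑ j ∈ Finset.univ \ A, w i j := by
        have hsplit : ∀ h : V → V → ℝ, ∑ i, ∑ j, h i j
            = (∑ i ∈ A, ∑ j ∈ A, h i j) + (∑ i ∈ A, ∑ j ∈ Finset.univ \ A, h i j)
              + ((∑ i ∈ Finset.univ \ A, ∑ j ∈ A, h i j)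
              + (∑ i ∈ Finset.univ \ A, ∑ j ∈ Finset.univ \ A, h i j)) := by
          intro h
          have inner : ∀ i : V, (∑ j, h i j) = ∑ j ∈ A, h i j + ∑ j ∈ Finset.univ \ A, h i j := by
            intro i
            rw [add_comm, Finset.sum_sdiff (Finset.subset_univ A)]
          calc ∑ i, ∑ j, h i j
              = ∑ i ∈ Finset.univ \ A, (∑ j, h i j) + ∑ i ∈ A, (∑ j, h i j) :=
                (Finset.sum_sdiff (Finset.subset_univ A)).symm
            _ = ∑ i ∈ Finset.univ \ A, (∑ j ∈ A, h i j + ∑ j ∈ Finset.univ \ A, h i j)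
                + ∑ i ∈ A, (∑ j ∈ A, h i j + ∑ j ∈ Finset.univ \ A, h i j) := by
                congr 1 <;> exact Finset.sum_congr rfl (fun i _ => inner i)
            _ = _ := by rw [Finset.sum_add_distrib, Finset.sum_add_distrib]; ring
        rw [hsplit]
        have e1 : (∑ i ∈ A, ∑ j ∈ A, w i j * |(if m ≤ f i then (1:ℝ) else 0) - (if m ≤ f j then (1:ℝ) else 0)|) = 0 := by
          apply Finset.sum_eq_zero; intro i hi
          apply Finset.sum_eq_zero; intro j hj
          rw [if_pos (Finset.mem_filter.mp hi).2, if_pos (Finset.mem_filter.mp hj).2]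
          simp
        have hnotA : ∀ j ∈ Finset.univ \ A, ¬ m ≤ f j := by
          intro j hj h
          exact (Finset.mem_sdiff.mp hj).2 (Finset.mem_filter.mpr ⟨Finset.mem_univ j, h⟩)
        have e2 : (∑ i ∈ A, ∑ j ∈ Finset.univ \ A, w i j * |(if m ≤ f i then (1:ℝ) else 0) - (if m ≤ f j then (1:ℝ) else 0)|) = ∑ i ∈ A, ∑ j ∈ Finset.univ \ A, w i j := by
          apply Finset.sum_congr rfl; intro i hi
          apply Finset.sum_congr rfl; intro j hj
          rw [if_pos (Finset.mem_filter.mp hi).2, if_neg (hnotA j hj)]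
          norm_num
        have e3 : (∑ i ∈ Finset.univ \ A, ∑ j ∈ A, w i j * |(if m ≤ f i then (1:ℝ) else 0) - (if m ≤ f j then (1:ℝ) else 0)|) = ∑ i ∈ A, ∑ j ∈ Finset.univ \ A, w i j := by
          rw [Finset.sum_comm]
          apply Finset.sum_congr rfl; intro i hi
          apply Finset.sum_congr rfl; intro j hj
          rw [if_pos (Finset.mem_filter.mp hi).2, if_neg (hnotA j hj), hsym]
          norm_num
        have e4 : (∑ i ∈ Finset.univ \ A, ∑ j ∈ Finset.univ \ A, w i j * |(if m ≤ f i then (1:ℝ) else 0) - (if m ≤ f j then (1:ℝ) else 0)|) = 0 := by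
          apply Finset.sum_eq_zero; intro i hi
          apply Finset.sum_eq_zero; intro j hj
          rw [if_neg (hnotA i hi), if_neg (hnotA j hj)]
          simp
        rw [e1, e2, e3, e4]
        ring
      -- final combination
      have hrhs : ∑ i, ∑ j, w i j * |f i - f j|
          = (∑ i, ∑ j, w i j * |g i - g j|)
            + (m - s) * ∑ i, ∑ j, w i j * |(if m ≤ f i then (1:ℝ) else 0) - (if m ≤ f j then (1:ℝ) else 0)| := by
        rw [Finset.mul_sum, ← Finset.sum_add_distrib]
        apply Finset.sum_congr rfl; intro i _
        rw [Finset.mul_sum, ← Finset.sum_add_distrib]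
        apply Finset.sum_congr rfl; intro j _
        rw [habs i j]
        ring
      have hms : 0 ≤ m - s := by linarith
      calc β * ∑ i, f i * μ i
          = β * (∑ i, g i * μ i) + (m - s) * (β * ∑ i ∈ A, μ i) := by
            rw [hsum_f]; ring
        _ ≤ (1 / 2) * (∑ i, ∑ j, w i j * |g i - g j|)
            + (m - s) * (∑ i ∈ A, ∑ j ∈ Finset.univ \ A, w i j) := by
            exact add_le_add ihg (mul_le_mul_of_nonneg_left hβA hms)
        _ = (1 / 2) * ∑ i, ∑ j, w i j * |f i - f j| := by
            rw [hrhs, hbdry]; ring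
end

section
/- Cheeger's inequality: the second smallest eigenvalue ρ_2 of the graph Laplacian satisfies ρ_2 ≥ β²/(2δ), where β is the isoperimetric constant and δ = max_i deg(i)/μ_i with deg(i) = Σ_j w_{ij}. -/
open Finset

lemma maxsplit (x : ℝ) : x = max x 0 - max (-x) 0 := by
  rcases le_total x 0 with h | h
  · rw [max_eq_right h, max_eq_left (by linarith : (0:ℝ) ≤ -x)]; ring
  · rw [max_eq_left h, max_eq_right (by linarith : -x ≤ (0:ℝ))]; ring

lemma maxsq (x : ℝ) : x ^ 2 = max x 0 ^ 2 + max (-x) 0 ^ 2 := by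
  rcases le_total x 0 with h | h
  · rw [max_eq_right h, max_eq_left (by linarith : (0:ℝ) ≤ -x)]; ring
  · rw [max_eq_left h, max_eq_right (by linarith : -x ≤ (0:ℝ))]; ring

lemma maxmul (x : ℝ) : max x 0 * max (-x) 0 = 0 := by
  rcases le_total x 0 with h | h
  · rw [max_eq_right h]; ring
  · rw [max_eq_right (by linarith : -x ≤ (0:ℝ))]; ring

lemma maxabs (x : ℝ) : max x 0 + max (-x) 0 = |x| := by
  rcases le_total x 0 with h | h
  · rw [max_eq_right h, max_eq_left (by linarith : (0:ℝ) ≤ -x), abs_of_nonpos h]; ring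
  · rw [max_eq_left h, max_eq_right (by linarith : -x ≤ (0:ℝ)), abs_of_nonneg h]; ring

lemma coarea {n : ℕ} (μ : Fin n → ℝ) (hμ : ∀ i, 0 ≤ μ i)
    (w : Fin n → Fin n → ℝ) (hw0 : ∀ i j, 0 ≤ w i j)
    (β half : ℝ)
    (hcut : ∀ A : Finset (Fin n), A.Nonempty →
      (∑ i ∈ A, μ i) ≤ half → β * (∑ i ∈ A, μ i) ≤ ∑ i ∈ A, ∑ j ∈ univ \ A, w i j)
    (a : Fin n → ℝ) (ha : ∀ i, 0 ≤ a i) (hz : ∃ j, a j = 0)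
    (hs : (∑ i ∈ univ.filter (fun i => a i ≠ 0), μ i) ≤ half) :
    β * ∑ i, a i * μ i ≤ ∑ i, ∑ j, w i j * max (a i - a j) 0 := by
  obtain ⟨k, hk⟩ : ∃ k, (univ.image a).card ≤ k := ⟨_, le_refl _⟩
  induction k generalizing a with
  | zero =>
    have h0 : (univ.image a) = ∅ := card_eq_zero.mp (Nat.le_zero.mp hk)
    have hu : (univ : Finset (Fin n)) = ∅ := image_eq_empty.mp h0
    simp [hu]
  | succ k ih =>
    by_cases ha0 : ∀ i, a i = 0
    · have h1 : ∑ i, a i * μ i = 0 := by simp [ha0]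
      have h2 : (0:ℝ) ≤ ∑ i, ∑ j, w i j * max (a i - a j) 0 := by
        apply Finset.sum_nonneg; intro i _
        apply Finset.sum_nonneg; intro j _
        exact mul_nonneg (hw0 i j) (le_max_right _ _)
      simpa [h1] using h2
    · push_neg at ha0
      obtain ⟨i₀, hi₀⟩ := ha0
      have hne : (univ : Finset (Fin n)).Nonempty := ⟨i₀, mem_univ _⟩
      have hine : (univ.image a).Nonempty := hne.image a
      set m := (univ.image a).max' hine with hm
      have hma : ∀ i, a i ≤ m := fun i => le_max' _ _ (mem_image_of_mem a (mem_univ i))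
      obtain ⟨j₀, hj₀⟩ := hz
      have hm0 : 0 < m := lt_of_lt_of_le (lt_of_le_of_ne (ha i₀) (Ne.symm hi₀)) (hma i₀)
      have hlt : (univ.filter (fun j => a j < m)).Nonempty :=
        ⟨j₀, by simp [hj₀, hm0]⟩
      have hltim : ((univ.filter (fun j => a j < m)).image a).Nonempty := hlt.image a
      set m' := ((univ.filter (fun j => a j < m)).image a).max' hltim with hm'
      obtain ⟨j₁, hj₁mem, hj₁⟩ := mem_image.mp (max'_mem _ hltim)
      rw [← hm'] at hj₁
      have hm'm : m' < m := by rw [← hj₁]; exact (mem_filter.mp hj₁mem).2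
      have hm'0 : 0 ≤ m' := by
        rw [← hj₀]
        rw [hm']; exact le_max' _ _ (mem_image_of_mem a (by simp [hj₀, hm0]))
      have hdich : ∀ i, m' < a i → a i = m := by
        intro i hi
        by_contra hne'
        have h1 : a i < m := lt_of_le_of_ne (hma i) hne'
        have h2 : a i ≤ m' := by
          rw [hm']; exact le_max' _ _ (mem_image_of_mem a (by simp [h1]))
        linarith
      set a' : Fin n → ℝ := fun i => min (a i) m' with ha'
      set S := univ.filter (fun i => m' < a i) with hS
      -- value facts
      have ga : ∀ i, m' < a i → a' i = m' := by
        intro i h; rw [ha']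
        exact min_eq_right (by rw [hdich i h]; exact hm'm.le)
      have gb : ∀ i, ¬ m' < a i → a' i = a i := by
        intro i h; rw [ha']; exact min_eq_left (not_lt.mp h)
      -- pointwise identities
      have P1 : ∀ i, a i * μ i = a' i * μ i + (if m' < a i then (m - m') * μ i else 0) := by
        intro i
        by_cases h : m' < a i
        · rw [if_pos h, ga i h, hdich i h]; ring
        · rw [if_neg h, gb i h]; ring
      have P2 : ∀ i j, w i j * max (a i - a j) 0 =
          w i j * max (a' i - a' j) 0 +
          (if m' < a i ∧ ¬ m' < a j then (m - m') * w i j else 0) := by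
        intro i j
        by_cases hi : m' < a i <;> by_cases hj : m' < a j
        · rw [if_neg (by tauto), hdich i hi, hdich j hj, ga i hi, ga j hj]; ring
        · have hj' := not_lt.mp hj
          rw [if_pos ⟨hi, hj⟩, hdich i hi, ga i hi, gb j hj,
            max_eq_left (by linarith : (0:ℝ) ≤ m - a j),
            max_eq_left (by linarith : (0:ℝ) ≤ m' - a j)]
          ring
        · have hi' := not_lt.mp hi
          rw [if_neg (by tauto), hdich j hj, ga j hj, gb i hi,
            max_eq_right (by linarith : a i - m ≤ (0:ℝ)),
            max_eq_right (by linarith : a i - m' ≤ (0:ℝ))]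
          ring
        · rw [if_neg (by tauto), gb i hi, gb j hj]; ring
      -- sum identities
      have EQ1 : ∑ i, a i * μ i = (∑ i, a' i * μ i) + (m - m') * ∑ i ∈ S, μ i := by
        rw [Finset.sum_congr rfl (fun i _ => P1 i), Finset.sum_add_distrib]
        congr 1
        rw [Finset.mul_sum, hS, Finset.sum_filter]
      have IND : (∑ i, ∑ j, (if m' < a i ∧ ¬ m' < a j then (m - m') * w i j else 0))
          = (m - m') * ∑ i ∈ S, ∑ j ∈ univ \ S, w i j := by
        have step1 : ∀ i, (∑ j, (if m' < a i ∧ ¬ m' < a j then (m - m') * w i j else 0))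
            = if m' < a i then (∑ j ∈ univ \ S, (m - m') * w i j) else 0 := by
          intro i
          by_cases h : m' < a i
          · rw [if_pos h]
            have hset : (univ \ S : Finset (Fin n)) = univ.filter (fun j => ¬ m' < a j) := by
              rw [hS, Finset.filter_not]
            rw [hset, Finset.sum_filter]
            exact Finset.sum_congr rfl fun j _ => by
              by_cases hj : m' < a j <;> simp [h, hj]
          · rw [if_neg h, Finset.sum_eq_zero]
            intro j _; simp [h]
        rw [Finset.sum_congr rfl fun i _ => step1 i, ← Finset.sum_filter, ← hS,
          Finset.mul_sum]
        exact Finset.sum_congr rfl fun i _ => (Finset.mul_sum _ _ _).symm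
      have EQ2 : ∑ i, ∑ j, w i j * max (a i - a j) 0
          = (∑ i, ∑ j, w i j * max (a' i - a' j) 0)
            + (m - m') * ∑ i ∈ S, ∑ j ∈ univ \ S, w i j := by
        rw [← IND, ← Finset.sum_add_distrib]
        refine Finset.sum_congr rfl fun i _ => ?_
        rw [← Finset.sum_add_distrib]
        exact Finset.sum_congr rfl fun j _ => P2 i j
      -- S is admissible
      obtain ⟨i₂, _, hi₂⟩ := mem_image.mp (max'_mem _ hine)
      rw [← hm] at hi₂
      have hSne : S.Nonempty := ⟨i₂, by rw [hS]; simp [hi₂, hm'm]⟩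
      have hSsup : S ⊆ univ.filter (fun i => a i ≠ 0) := by
        intro i hi
        rw [hS] at hi
        have := (mem_filter.mp hi).2
        simp only [mem_filter, mem_univ, true_and]
        intro h; rw [h] at this; linarith
      have hSvol : (∑ i ∈ S, μ i) ≤ half :=
        le_trans (Finset.sum_le_sum_of_subset_of_nonneg hSsup fun i _ _ => hμ i) hs
      have hScut := hcut S hSne hSvol
      -- IH hypotheses for a'
      have ha'0 : ∀ i, 0 ≤ a' i := fun i => le_min (ha i) hm'0
      have hz' : ∃ j, a' j = 0 := ⟨j₀, by show a j₀ ⊓ m' = 0; rw [hj₀]; exact min_eq_left hm'0⟩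
      have hs' : (∑ i ∈ univ.filter (fun i => a' i ≠ 0), μ i) ≤ half := by
        refine le_trans (Finset.sum_le_sum_of_subset_of_nonneg ?_ fun i _ _ => hμ i) hs
        intro i hi
        simp only [mem_filter, mem_univ, true_and] at hi ⊢
        intro h
        apply hi
        show a i ⊓ m' = 0
        rw [h]
        exact min_eq_left hm'0
      have hk' : (univ.image a').card ≤ k := by
        have hm'im : m' ∈ univ.image a := by rw [← hj₁]; exact mem_image_of_mem a (mem_univ j₁)
        have hsub : univ.image a' ⊆ (univ.image a).erase m := by
          intro x hx
          obtain ⟨i, _, hi⟩ := mem_image.mp hx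
          by_cases h : m' < a i
          · rw [← hi, ga i h]
            exact mem_erase.mpr ⟨hm'm.ne, hm'im⟩
          · rw [← hi, gb i h]
            have h' := not_lt.mp h
            exact mem_erase.mpr ⟨by intro hEq; rw [hEq] at h'; linarith,
              mem_image_of_mem a (mem_univ i)⟩
        have h1 : ((univ.image a).erase m).card = (univ.image a).card - 1 :=
          card_erase_of_mem (max'_mem _ hine)
        have := card_le_card hsub
        omega
      have IH := ih a' ha'0 hz' hs' hk'
      rw [EQ1, EQ2, mul_add]
      have hstep : β * ((m - m') * ∑ i ∈ S, μ i) ≤ (m - m') * ∑ i ∈ S, ∑ j ∈ univ \ S, w i j := by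
        have h1 : β * ((m - m') * ∑ i ∈ S, μ i) = (m - m') * (β * ∑ i ∈ S, μ i) := by ring
        rw [h1]
        exact mul_le_mul_of_nonneg_left hScut (by linarith)
      exact add_le_add IH hstep
lemma piece {n : ℕ} (μ : Fin n → ℝ) (hμ : ∀ i, 0 < μ i)
    (w : Fin n → Fin n → ℝ) (hw0 : ∀ i j, 0 ≤ w i j) (hsym : ∀ i j, w i j = w j i)
    (β δ ρ half : ℝ) (hβ0 : 0 ≤ β) (hρ0 : 0 ≤ ρ) (hδ0 : 0 ≤ δ)
    (hδ : ∀ i, (∑ j, w i j) ≤ δ * μ i)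
    (hcut : ∀ A : Finset (Fin n), A.Nonempty →
      (∑ i ∈ A, μ i) ≤ half → β * (∑ i ∈ A, μ i) ≤ ∑ i ∈ A, ∑ j ∈ univ \ A, w i j)
    (g : Fin n → ℝ) (hg : ∀ i, 0 ≤ g i) (hzg : ∃ j, g j = 0)
    (hsupp : (∑ i ∈ univ.filter (fun i => g i ≠ 0), μ i) ≤ half)
    (hN : 0 < ∑ i, g i ^ 2 * μ i)
    (hD : (∑ i, ∑ j, w i j * (g i - g j) ^ 2) ≤ 2 * ρ * ∑ i, g i ^ 2 * μ i) :
    β ^ 2 ≤ 2 * δ * ρ := by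
  set N := ∑ i, g i ^ 2 * μ i with hNdef
  set a : Fin n → ℝ := fun i => g i ^ 2 with hadef
  set E := ∑ i, ∑ j, w i j * max (a i - a j) 0 with hEdef
  -- step 1 : coarea
  have h1 : β * N ≤ E := by
    have hfe : univ.filter (fun i => a i ≠ 0) = univ.filter (fun i => g i ≠ 0) := by
      apply Finset.filter_congr
      intro i _
      rw [hadef]
      constructor
      · intro h hh; exact h (by show g i ^ 2 = 0; rw [hh]; ring)
      · intro h hh; exact h (sq_eq_zero_iff.mp hh)
    have := coarea μ (fun i => (hμ i).le) w hw0 β half hcut a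
      (fun i => sq_nonneg _) (hzg.imp fun j hj => by rw [hadef]; simp [hj])
      (by rw [hfe]; exact hsupp)
    exact this
  -- step 2 : 2E = weighted sum of |a i - a j|
  have h2 : 2 * E = ∑ i, ∑ j, w i j * |a i - a j| := by
    have hsw : (∑ i, ∑ j, w i j * max (a j - a i) 0) = E := by
      rw [Finset.sum_comm]
      exact Finset.sum_congr rfl fun j _ => Finset.sum_congr rfl fun i _ => by rw [hsym]
    calc 2 * E = E + ∑ i, ∑ j, w i j * max (a j - a i) 0 := by rw [hsw]; ring
    _ = ∑ i, ∑ j, (w i j * max (a i - a j) 0 + w i j * max (a j - a i) 0) := by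
        rw [hEdef, ← Finset.sum_add_distrib]
        exact Finset.sum_congr rfl fun i _ => (Finset.sum_add_distrib).symm
    _ = ∑ i, ∑ j, w i j * |a i - a j| := by
        refine Finset.sum_congr rfl fun i _ => Finset.sum_congr rfl fun j _ => ?_
        rw [← mul_add, show a j - a i = -(a i - a j) by ring, maxabs]
  -- step 3 : rewrite |a i - a j|
  have h3 : ∀ i j, |a i - a j| = |g i - g j| * (g i + g j) := by
    intro i j
    have he : a i - a j = (g i - g j) * (g i + g j) := by rw [hadef]; ring
    rw [he, abs_mul, abs_of_nonneg (add_nonneg (hg i) (hg j))]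
  -- step 4 : Cauchy-Schwarz
  have h4 : (2 * E) ^ 2 ≤ (∑ i, ∑ j, w i j * (g i - g j) ^ 2)
      * (∑ i, ∑ j, w i j * (g i + g j) ^ 2) := by
    have hcs := Finset.sum_mul_sq_le_sq_mul_sq (univ : Finset (Fin n × Fin n))
      (fun p => Real.sqrt (w p.1 p.2) * |g p.1 - g p.2|)
      (fun p => Real.sqrt (w p.1 p.2) * (g p.1 + g p.2))
    have e1 : (∑ p : Fin n × Fin n, (Real.sqrt (w p.1 p.2) * |g p.1 - g p.2|)
        * (Real.sqrt (w p.1 p.2) * (g p.1 + g p.2)))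
        = 2 * E := by
      rw [h2, Fintype.sum_prod_type]
      refine Finset.sum_congr rfl fun i _ => Finset.sum_congr rfl fun j _ => ?_
      rw [h3 i j]
      have hss : Real.sqrt (w i j) * Real.sqrt (w i j) = w i j := Real.mul_self_sqrt (hw0 i j)
      show Real.sqrt (w i j) * |g i - g j| * (Real.sqrt (w i j) * (g i + g j))
        = w i j * (|g i - g j| * (g i + g j))
      linear_combination (|g i - g j| * (g i + g j)) * hss
    have e2 : (∑ p : Fin n × Fin n, (Real.sqrt (w p.1 p.2) * |g p.1 - g p.2|) ^ 2)
        = ∑ i, ∑ j, w i j * (g i - g j) ^ 2 := by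
      rw [Fintype.sum_prod_type]
      refine Finset.sum_congr rfl fun i _ => Finset.sum_congr rfl fun j _ => ?_
      show (Real.sqrt (w i j) * |g i - g j|) ^ 2 = w i j * (g i - g j) ^ 2
      rw [mul_pow, sq_abs, Real.sq_sqrt (hw0 i j)]
    have e3 : (∑ p : Fin n × Fin n, (Real.sqrt (w p.1 p.2) * (g p.1 + g p.2)) ^ 2)
        = ∑ i, ∑ j, w i j * (g i + g j) ^ 2 := by
      rw [Fintype.sum_prod_type]
      refine Finset.sum_congr rfl fun i _ => Finset.sum_congr rfl fun j _ => ?_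
      show (Real.sqrt (w i j) * (g i + g j)) ^ 2 = w i j * (g i + g j) ^ 2
      rw [mul_pow, Real.sq_sqrt (hw0 i j)]
    rw [← e1, ← e2, ← e3]
    exact hcs
  -- step 5 : bound the (g i + g j)^2 sum
  have h5 : (∑ i, ∑ j, w i j * (g i + g j) ^ 2) ≤ 4 * δ * N := by
    have s1 : (∑ i, ∑ j, w i j * (g i + g j) ^ 2)
        ≤ ∑ i, ∑ j, (w i j * (2 * g i ^ 2) + w i j * (2 * g j ^ 2)) := by
      refine Finset.sum_le_sum fun i _ => Finset.sum_le_sum fun j _ => ?_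
      nlinarith [hw0 i j, sq_nonneg (g i - g j)]
    have s2 : (∑ i, ∑ j, (w i j * (2 * g i ^ 2) + w i j * (2 * g j ^ 2)))
        = 4 * ∑ i, g i ^ 2 * (∑ j, w i j) := by
      calc ∑ i, ∑ j, (w i j * (2 * g i ^ 2) + w i j * (2 * g j ^ 2))
          = (∑ i, ∑ j, w i j * (2 * g i ^ 2)) + (∑ i, ∑ j, w i j * (2 * g j ^ 2)) := by
            rw [← Finset.sum_add_distrib]
            exact Finset.sum_congr rfl fun i _ => Finset.sum_add_distrib
        _ = (∑ i, 2 * g i ^ 2 * ∑ j, w i j) + (∑ j, 2 * g j ^ 2 * ∑ i, w j i) := by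
            congr 1
            · refine Finset.sum_congr rfl fun i _ => ?_
              rw [Finset.mul_sum]
              exact Finset.sum_congr rfl fun j _ => by ring
            · rw [Finset.sum_comm]
              refine Finset.sum_congr rfl fun j _ => ?_
              rw [Finset.mul_sum]
              exact Finset.sum_congr rfl fun i _ => by rw [hsym i j]; ring
        _ = 4 * ∑ i, g i ^ 2 * (∑ j, w i j) := by
            rw [Finset.mul_sum, ← Finset.sum_add_distrib]
            exact Finset.sum_congr rfl fun i _ => by ring
    have s3 : (∑ i, g i ^ 2 * (∑ j, w i j)) ≤ δ * N := by
      rw [hNdef, Finset.mul_sum]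
      refine Finset.sum_le_sum fun i _ => ?_
      calc g i ^ 2 * (∑ j, w i j) ≤ g i ^ 2 * (δ * μ i) :=
            mul_le_mul_of_nonneg_left (hδ i) (sq_nonneg _)
        _ = δ * (g i ^ 2 * μ i) := by ring
    calc (∑ i, ∑ j, w i j * (g i + g j) ^ 2)
        ≤ 4 * ∑ i, g i ^ 2 * (∑ j, w i j) := by rw [← s2]; exact s1
      _ ≤ 4 * (δ * N) := by linarith
      _ = 4 * δ * N := by ring
  -- combine
  have hU0 : (0:ℝ) ≤ ∑ i, ∑ j, w i j * (g i + g j) ^ 2 :=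
    Finset.sum_nonneg fun i _ => Finset.sum_nonneg fun j _ =>
      mul_nonneg (hw0 i j) (sq_nonneg _)
  have hprod : (∑ i, ∑ j, w i j * (g i - g j) ^ 2) * (∑ i, ∑ j, w i j * (g i + g j) ^ 2)
      ≤ (2 * ρ * N) * (4 * δ * N) := by
    apply mul_le_mul hD h5 hU0
    positivity
  have hE2 : (2 * E) ^ 2 ≤ (2 * ρ * N) * (4 * δ * N) := le_trans h4 hprod
  have hβN : (β * N) ^ 2 ≤ E ^ 2 := by
    have h0 : 0 ≤ β * N := mul_nonneg hβ0 hN.le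
    nlinarith
  have hN2 : (0:ℝ) < N ^ 2 := by positivity
  nlinarith [hE2, hβN, hN2]
/-- Cheeger's inequality: `ρ₂ ≥ β² / (2δ)` where `δ = max_i deg(i)/μ_i`. -/
theorem cheeger_inequality {n : ℕ} (hn : 0 < n)
    (μ : Fin n → ℝ) (hμ : ∀ i, 0 < μ i)
    (w : Fin n → Fin n → ℝ) (hw0 : ∀ i j, 0 ≤ w i j)
    (hsym : ∀ i j, w i j = w j i) (hdiag : ∀ i, w i i = 0)
    (ρ₂ : ℝ)
    (hρ₂ : IsLeast {x : ℝ | ∃ f : Fin n → ℝ, f ≠ 0 ∧ (∑ i, f i * μ i) = 0 ∧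
      x = ((1 / 2) * ∑ i, ∑ j, w i j * (f i - f j) ^ 2) / (∑ i, f i ^ 2 * μ i)} ρ₂)
    (β : ℝ)
    (hβ : IsLeast {x : ℝ | ∃ A : Finset (Fin n), A.Nonempty ∧ A ≠ Finset.univ ∧
      (∑ i ∈ A, μ i) ≤ (∑ i, μ i) / 2 ∧
      x = (∑ i ∈ A, ∑ j ∈ Finset.univ \ A, w i j) / (∑ i ∈ A, μ i)} β) :
    haveI : Nonempty (Fin n) := ⟨⟨0, hn⟩⟩
    β ^ 2 / (2 * Finset.univ.sup' Finset.univ_nonempty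
      (fun i => (∑ j, w i j) / μ i)) ≤ ρ₂ := by
  haveI inst : Nonempty (Fin n) := ⟨⟨0, hn⟩⟩
  set δ := Finset.univ.sup' Finset.univ_nonempty (fun i => (∑ j, w i j) / μ i) with hδdef
  show β ^ 2 / (2 * δ) ≤ ρ₂
  -- basic facts about δ
  have hδi : ∀ i, (∑ j, w i j) ≤ δ * μ i := by
    intro i
    have h := Finset.le_sup' (fun i => (∑ j, w i j) / μ i) (mem_univ i)
    rw [← hδdef] at h
    exact (div_le_iff₀ (hμ i)).mp h
  have hδ0 : 0 ≤ δ := by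
    obtain ⟨i⟩ := inst
    have h := Finset.le_sup' (fun i => (∑ j, w i j) / μ i) (mem_univ i)
    rw [← hδdef] at h
    exact le_trans (div_nonneg (Finset.sum_nonneg fun j _ => hw0 i j) (hμ i).le) h
  -- unpack ρ₂
  obtain ⟨⟨f, hf0, hfsum, hfeq⟩, hρlb⟩ := hρ₂
  set Nf := ∑ i, f i ^ 2 * μ i with hNfdef
  set Df := ∑ i, ∑ j, w i j * (f i - f j) ^ 2 with hDfdef
  have hNf : 0 < Nf := by
    obtain ⟨i, hi⟩ := Function.ne_iff.mp hf0
    exact Finset.sum_pos' (fun i _ => mul_nonneg (sq_nonneg _) (hμ i).le)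
      ⟨i, mem_univ i, mul_pos
        (lt_of_le_of_ne (sq_nonneg _) (Ne.symm (pow_ne_zero 2 hi))) (hμ i)⟩
  have hDf0 : 0 ≤ Df :=
    Finset.sum_nonneg fun i _ => Finset.sum_nonneg fun j _ =>
      mul_nonneg (hw0 i j) (sq_nonneg _)
  have hρ0 : 0 ≤ ρ₂ := by
    rw [hfeq]
    exact div_nonneg (by linarith) hNf.le
  have hfD : Df = 2 * ρ₂ * Nf := by
    have h : ρ₂ * Nf = (1 / 2) * Df := by
      rw [hfeq]; exact div_mul_cancel₀ _ (ne_of_gt hNf)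
    linarith
  -- unpack β
  have hβ0 : 0 ≤ β := by
    obtain ⟨⟨A₀, hA₀ne, _, _, hA₀eq⟩, _⟩ := hβ
    rw [hA₀eq]
    exact div_nonneg
      (Finset.sum_nonneg fun i _ => Finset.sum_nonneg fun j _ => hw0 i j)
      (Finset.sum_pos (fun i _ => hμ i) hA₀ne).le
  set V := ∑ i, μ i with hVdef
  have hV : 0 < V := Finset.sum_pos (fun i _ => hμ i) univ_nonempty
  have hcut : ∀ A : Finset (Fin n), A.Nonempty →
      (∑ i ∈ A, μ i) ≤ V / 2 → β * (∑ i ∈ A, μ i) ≤ ∑ i ∈ A, ∑ j ∈ univ \ A, w i j := by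
    intro A hAne hAvol
    have hAuniv : A ≠ univ := by
      intro h
      rw [h] at hAvol
      rw [hVdef] at hAvol
      linarith
    have hvolpos : 0 < ∑ i ∈ A, μ i := Finset.sum_pos (fun i _ => hμ i) hAne
    have h := hβ.2 ⟨A, hAne, hAuniv, hAvol, rfl⟩
    exact (le_div_iff₀ hvolpos).mp h
  -- the median
  set T := (univ.image f).filter
    (fun t => V / 2 ≤ ∑ i ∈ univ.filter (fun i => f i ≤ t), μ i) with hTdef
  have hTne : T.Nonempty := by
    refine ⟨(univ.image f).max' (univ_nonempty.image f), ?_⟩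
    rw [hTdef, mem_filter]
    refine ⟨max'_mem _ _, ?_⟩
    have hfil : univ.filter (fun i => f i ≤ (univ.image f).max' (univ_nonempty.image f)) = univ := by
      apply Finset.filter_true_of_mem
      intro i _
      exact le_max' _ _ (mem_image_of_mem f (mem_univ i))
    rw [hfil, ← hVdef]
    linarith
  set c := T.min' hTne with hcdef
  have hcT := Finset.min'_mem T hTne
  rw [← hcdef] at hcT
  rw [hTdef, mem_filter] at hcT
  obtain ⟨hcim, hcvol⟩ := hcT
  have hsplit : (∑ i ∈ univ.filter (fun i => f i ≤ c), μ i)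
      + (∑ i ∈ univ.filter (fun i => ¬ f i ≤ c), μ i) = V := by
    rw [hVdef]
    exact Finset.sum_filter_add_sum_filter_not univ _ μ
  have hgt : (∑ i ∈ univ.filter (fun i => c < f i), μ i) ≤ V / 2 := by
    have he : univ.filter (fun i => ¬ f i ≤ c) = univ.filter (fun i => c < f i) := by
      apply Finset.filter_congr
      intro i _
      exact not_le
    rw [← he]
    linarith
  have hlt : (∑ i ∈ univ.filter (fun i => f i < c), μ i) ≤ V / 2 := by
    by_cases hne : (univ.filter (fun i => f i < c)).Nonempty
    · set t' := ((univ.filter (fun i => f i < c)).image f).max' (hne.image f) with ht'def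
      obtain ⟨j₂, hj₂mem, hj₂⟩ := mem_image.mp (max'_mem _ (hne.image f))
      rw [← ht'def] at hj₂
      have ht'c : t' < c := by rw [← hj₂]; exact (mem_filter.mp hj₂mem).2
      have hEq : univ.filter (fun i => f i < c) = univ.filter (fun i => f i ≤ t') := by
        ext i
        simp only [mem_filter, mem_univ, true_and]
        constructor
        · intro h
          rw [ht'def]
          exact le_max' _ _ (mem_image_of_mem f (by simp [h]))
        · intro h
          exact lt_of_le_of_lt h ht'c
      have ht'im : t' ∈ univ.image f := by
        rw [← hj₂]; exact mem_image_of_mem f (mem_univ j₂)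
      have hnotT : ¬ V / 2 ≤ ∑ i ∈ univ.filter (fun i => f i ≤ t'), μ i := by
        intro hcon
        have : t' ∈ T := by rw [hTdef, mem_filter]; exact ⟨ht'im, hcon⟩
        have := Finset.min'_le T t' this
        rw [← hcdef] at this
        linarith
      rw [hEq]
      linarith [lt_of_not_ge hnotT]
    · rw [not_nonempty_iff_eq_empty] at hne
      rw [hne]
      simp
      linarith
  -- the two halves
  set g : Fin n → ℝ := fun i => max (f i - c) 0 with hgdef
  set h : Fin n → ℝ := fun i => max (-(f i - c)) 0 with hhdef
  have hg0 : ∀ i, 0 ≤ g i := fun i => le_max_right _ _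
  have hh0 : ∀ i, 0 ≤ h i := fun i => le_max_right _ _
  obtain ⟨j₃, _, hj₃⟩ := mem_image.mp hcim
  have hzg : ∃ j, g j = 0 := ⟨j₃, by rw [hgdef]; show max (f j₃ - c) 0 = 0; rw [hj₃]; simp⟩
  have hzh : ∃ j, h j = 0 := ⟨j₃, by rw [hhdef]; show max (-(f j₃ - c)) 0 = 0; rw [hj₃]; simp⟩
  have hgsupp : (∑ i ∈ univ.filter (fun i => g i ≠ 0), μ i) ≤ V / 2 := by
    refine le_trans (Finset.sum_le_sum_of_subset_of_nonneg ?_ fun i _ _ => (hμ i).le) hgt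
    intro i hi
    simp only [mem_filter, mem_univ, true_and] at hi ⊢
    by_contra hcon
    push_neg at hcon
    exact hi (by show max (f i - c) 0 = 0; exact max_eq_right (by linarith))
  have hhsupp : (∑ i ∈ univ.filter (fun i => h i ≠ 0), μ i) ≤ V / 2 := by
    refine le_trans (Finset.sum_le_sum_of_subset_of_nonneg ?_ fun i _ _ => (hμ i).le) hlt
    intro i hi
    simp only [mem_filter, mem_univ, true_and] at hi ⊢
    by_contra hcon
    push_neg at hcon
    exact hi (by show max (-(f i - c)) 0 = 0; exact max_eq_right (by linarith))
  -- energy splitting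
  set Dg := ∑ i, ∑ j, w i j * (g i - g j) ^ 2 with hDgdef
  set Dh := ∑ i, ∑ j, w i j * (h i - h j) ^ 2 with hDhdef
  set Ng := ∑ i, g i ^ 2 * μ i with hNgdef
  set Nh := ∑ i, h i ^ 2 * μ i with hNhdef
  have hNg0 : 0 ≤ Ng := Finset.sum_nonneg fun i _ => mul_nonneg (sq_nonneg _) (hμ i).le
  have hNh0 : 0 ≤ Nh := Finset.sum_nonneg fun i _ => mul_nonneg (sq_nonneg _) (hμ i).le
  have hDg0 : 0 ≤ Dg := Finset.sum_nonneg fun i _ => Finset.sum_nonneg fun j _ =>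
    mul_nonneg (hw0 i j) (sq_nonneg _)
  have hDh0 : 0 ≤ Dh := Finset.sum_nonneg fun i _ => Finset.sum_nonneg fun j _ =>
    mul_nonneg (hw0 i j) (sq_nonneg _)
  have hDgh : Dg + Dh ≤ Df := by
    rw [hDgdef, hDhdef, hDfdef, ← Finset.sum_add_distrib]
    refine Finset.sum_le_sum fun i _ => ?_
    rw [← Finset.sum_add_distrib]
    refine Finset.sum_le_sum fun j _ => ?_
    have key : (g i - g j) ^ 2 + (h i - h j) ^ 2 ≤ (f i - f j) ^ 2 := by
      have e1 : f i - c = g i - h i := maxsplit (f i - c)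
      have e2 : f j - c = g j - h j := maxsplit (f j - c)
      have e3 : g i * h i = 0 := maxmul (f i - c)
      have e4 : g j * h j = 0 := maxmul (f j - c)
      have p1 : 0 ≤ g i * h j := mul_nonneg (hg0 i) (hh0 j)
      have p2 : 0 ≤ g j * h i := mul_nonneg (hg0 j) (hh0 i)
      have hid : (f i - f j) ^ 2 = (g i - g j) ^ 2 + (h i - h j) ^ 2
          + 2 * (g i * h j) + 2 * (g j * h i) - 2 * (g i * h i) - 2 * (g j * h j) := by
        have hxy : f i - f j = (f i - c) - (f j - c) := by ring
        rw [hxy, e1, e2]; ring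
      linarith [hid]
    have hkw : w i j * ((g i - g j) ^ 2 + (h i - h j) ^ 2) ≤ w i j * (f i - f j) ^ 2 :=
      mul_le_mul_of_nonneg_left key (hw0 i j)
    linarith [hkw]
  have hNgh : Nf ≤ Ng + Nh := by
    have hexp : ∀ i, (f i - c) ^ 2 * μ i
        = f i ^ 2 * μ i - 2 * c * (f i * μ i) + c ^ 2 * μ i := by intro i; ring
    have hsum2 : ∑ i, (f i - c) ^ 2 * μ i = Nf + c ^ 2 * V := by
      rw [Finset.sum_congr rfl fun i _ => hexp i]
      rw [Finset.sum_add_distrib, Finset.sum_sub_distrib, ← Finset.mul_sum, ← Finset.mul_sum,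
        hfsum, ← hNfdef, ← hVdef]
      ring
    have hgh : ∀ i, g i ^ 2 * μ i + h i ^ 2 * μ i = (f i - c) ^ 2 * μ i := by
      intro i
      have e : (f i - c) ^ 2 = g i ^ 2 + h i ^ 2 := maxsq (f i - c)
      rw [e]; ring
    have : Ng + Nh = ∑ i, (f i - c) ^ 2 * μ i := by
      rw [hNgdef, hNhdef, ← Finset.sum_add_distrib]
      exact Finset.sum_congr rfl fun i _ => hgh i
    rw [this, hsum2]
    nlinarith [sq_nonneg c, hV]
  -- choose the good half
  have key : ∃ φ : Fin n → ℝ, (∀ i, 0 ≤ φ i) ∧ (∃ j, φ j = 0) ∧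
      (∑ i ∈ univ.filter (fun i => φ i ≠ 0), μ i) ≤ V / 2 ∧
      0 < (∑ i, φ i ^ 2 * μ i) ∧
      (∑ i, ∑ j, w i j * (φ i - φ j) ^ 2) ≤ 2 * ρ₂ * ∑ i, φ i ^ 2 * μ i := by
    have hDsum : Dg + Dh ≤ 2 * ρ₂ * (Ng + Nh) := by
      have h2 : 2 * ρ₂ * Nf ≤ 2 * ρ₂ * (Ng + Nh) :=
        mul_le_mul_of_nonneg_left hNgh (by linarith)
      linarith [hDgh, hfD, h2]
    by_cases hNgpos : 0 < Ng
    · by_cases hok : Dg ≤ 2 * ρ₂ * Ng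
      · exact ⟨g, hg0, hzg, hgsupp, by rw [← hNgdef]; exact hNgpos, by rw [← hDgdef, ← hNgdef]; exact hok⟩
      · push_neg at hok
        have hNhpos : 0 < Nh := by
          by_contra hcon
          push_neg at hcon
          have hNh : Nh = 0 := le_antisymm hcon hNh0
          have he : 2 * ρ₂ * (Ng + Nh) = 2 * ρ₂ * Ng := by rw [hNh]; ring
          linarith [hDsum, hok, hDh0, he]
        have hok2 : Dh ≤ 2 * ρ₂ * Nh := by
          have he : 2 * ρ₂ * (Ng + Nh) = 2 * ρ₂ * Ng + 2 * ρ₂ * Nh := by ring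
          linarith [hDsum, hok, he]
        exact ⟨h, hh0, hzh, hhsupp, by rw [← hNhdef]; exact hNhpos, by rw [← hDhdef, ← hNhdef]; exact hok2⟩
    · push_neg at hNgpos
      have hNgz : Ng = 0 := le_antisymm hNgpos hNg0
      have hNhpos : 0 < Nh := by linarith [hNgh, hNf, hNgz]
      have hNgz' : (∑ i, g i ^ 2 * μ i) = 0 := by rw [← hNgdef]; exact hNgz
      have hgz : ∀ i, g i = 0 := by
        intro i
        have hterm := (Finset.sum_eq_zero_iff_of_nonneg
          (fun i (_ : i ∈ univ) => mul_nonneg (sq_nonneg (g i)) (hμ i).le)).mp hNgz' i (mem_univ i)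
        have hsq : g i ^ 2 = 0 := by
          rcases mul_eq_zero.mp hterm with hh | hh
          · exact hh
          · exact absurd hh (ne_of_gt (hμ i))
        exact sq_eq_zero_iff.mp hsq
      have hDgz : Dg = 0 := by
        rw [hDgdef]
        apply Finset.sum_eq_zero
        intro i _
        apply Finset.sum_eq_zero
        intro j _
        rw [hgz i, hgz j]
        ring
      have hok2 : Dh ≤ 2 * ρ₂ * Nh := by
        have he : 2 * ρ₂ * (Ng + Nh) = 2 * ρ₂ * Nh := by rw [hNgz]; ring
        linarith [hDsum, hDgz, he]
      exact ⟨h, hh0, hzh, hhsupp, by rw [← hNhdef]; exact hNhpos, by rw [← hDhdef, ← hNhdef]; exact hok2⟩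
  obtain ⟨φ, hφ0, hφz, hφsupp, hφN, hφD⟩ := key
  have hfinal : β ^ 2 ≤ 2 * δ * ρ₂ :=
    piece μ hμ w hw0 hsym β δ ρ₂ (V / 2) hβ0 hρ0 hδ0 hδi hcut φ hφ0 hφz hφsupp hφN hφD
  rcases eq_or_lt_of_le hδ0 with hδz | hδpos
  · rw [← hδz]
    norm_num
    exact hρ0
  · rw [div_le_iff₀ (by positivity)]
    linarith
end

section
/- Commute time distance formula: with T(·,y) := m(·,y) − m(y,y)e_y, where m satisfies m(·,y) = 1 + S_c m(·,y) − m(y,y) S_c e_y for a connected graph, one has (T(x,y) + T(y,x))/(c·vol(V)) = Σ_{i=2}^n (1/ρ_i)(v_i(y) − v_i(x))² for all x, y ∈ V; in particular m(y,y)μ_y = vol(V). -/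
open Finset

/-- The commute time distance formula:
`(T(x,y)+T(y,x))/(c·vol V) = Σ_{i≥2} ρ_i⁻¹ (v_i(y) − v_i(x))²`,
and `m(y,y) μ_y = vol V`. -/
theorem commute_time_distance {n : ℕ} (hn : 0 < n)
    (μ : Fin n → ℝ) (hμ : ∀ i, 0 < μ i)
    (w : Fin n → Fin n → ℝ) (hw0 : ∀ i j, 0 ≤ w i j)
    (hsym : ∀ i j, w i j = w j i) (hdiag : ∀ i, w i i = 0)
    (volV : ℝ) (hvol : volV = ∑ i, μ i)
    (L : (Fin n → ℝ) → (Fin n → ℝ))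
    (hL : ∀ f x, L f x = (1 / μ x) * ∑ j, w x j * (f x - f j))
    (ρ : Fin n → ℝ) (v : Fin n → (Fin n → ℝ))
    (horth : ∀ i j, (∑ x, v i x * v j x * μ x) = if i = j then 1 else 0)
    (heig : ∀ i x, L (v i) x = ρ i * v i x)
    (hv0 : ∀ x, v ⟨0, hn⟩ x = 1 / Real.sqrt volV)
    (hρ0 : ρ ⟨0, hn⟩ = 0) (hρpos : ∀ i, i ≠ ⟨0, hn⟩ → 0 < ρ i)
    (c : ℝ) (hc : 0 < c)
    (S : (Fin n → ℝ) → (Fin n → ℝ)) (hS : ∀ f x, S f x = f x - (1 / c) * L f x)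
    (e : Fin n → (Fin n → ℝ)) (he : ∀ y x, e y x = if x = y then 1 else 0)
    (m : Fin n → Fin n → ℝ)
    (hm : ∀ x y, m x y = 1 + S (fun z => m z y) x - m y y * S (e y) x)
    (T : Fin n → Fin n → ℝ)
    (hT : ∀ x y, T x y = m x y - m y y * e y x) :
    (∀ y, m y y * μ y = volV) ∧
    (∀ x y, (T x y + T y x) / (c * volV) =
      ∑ i ∈ Finset.univ \ {(⟨0, hn⟩ : Fin n)}, (1 / ρ i) * (v i y - v i x) ^ 2) := by
  have hni : Nonempty (Fin n) := ⟨⟨0, hn⟩⟩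
  set i0 : Fin n := ⟨0, hn⟩ with hi0
  have hvolpos : 0 < volV := by
    rw [hvol]; exact Finset.sum_pos (fun i _ => hμ i) Finset.univ_nonempty
  have hsV : (0:ℝ) < Real.sqrt volV := Real.sqrt_pos.mpr hvolpos
  have hsV' : Real.sqrt volV ≠ 0 := ne_of_gt hsV
  have hc' : c ≠ 0 := ne_of_gt hc
  -- completeness relation
  have hcomp : ∀ x z : Fin n, (∑ i, v i x * v i z * μ z) = if x = z then 1 else 0 := by
    intro x z
    classical
    let A : Matrix (Fin n) (Fin n) ℝ := fun i x => v i x * Real.sqrt (μ x)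
    have hAAT : A * A.transpose = 1 := by
      ext i j
      have hterm : ∀ x, A i x * A.transpose x j = v i x * v j x * μ x := by
        intro x
        rw [Matrix.transpose_apply]; simp only [A]
        rw [show v i x * Real.sqrt (μ x) * (v j x * Real.sqrt (μ x))
            = v i x * v j x * (Real.sqrt (μ x) * Real.sqrt (μ x)) by ring,
          Real.mul_self_sqrt (le_of_lt (hμ x))]
      rw [Matrix.mul_apply, Finset.sum_congr rfl (fun x _ => hterm x), horth]
      simp [Matrix.one_apply]
    have hATA : A.transpose * A = 1 := mul_eq_one_comm.mp hAAT
    have h := congrFun (congrFun hATA x) z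
    rw [Matrix.mul_apply] at h
    have h2 : (∑ i, v i x * v i z * (Real.sqrt (μ x) * Real.sqrt (μ z)))
        = if x = z then 1 else 0 := by
      have hone : (1 : Matrix (Fin n) (Fin n) ℝ) x z = if x = z then 1 else 0 := by
        simp [Matrix.one_apply]
      rw [← hone, ← h]
      exact Finset.sum_congr rfl fun i _ => by
        rw [Matrix.transpose_apply]; simp only [A]; ring
    have hμx : Real.sqrt (μ x) ≠ 0 := ne_of_gt (Real.sqrt_pos.mpr (hμ x))
    have h3 : (∑ i, v i x * v i z * μ z)
        = (∑ i, v i x * v i z * (Real.sqrt (μ x) * Real.sqrt (μ z)))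
          * (Real.sqrt (μ z) / Real.sqrt (μ x)) := by
      rw [Finset.sum_mul]
      refine Finset.sum_congr rfl fun i _ => ?_
      rw [show v i x * v i z * (Real.sqrt (μ x) * Real.sqrt (μ z))
            * (Real.sqrt (μ z) / Real.sqrt (μ x))
          = v i x * v i z * ((Real.sqrt (μ z) * Real.sqrt (μ z))
            * (Real.sqrt (μ x) / Real.sqrt (μ x))) by ring,
        div_self hμx, Real.mul_self_sqrt (le_of_lt (hμ z)), mul_one]
    rw [h3, h2]
    by_cases hxz : x = z
    · subst hxz; simp [div_self hμx]
    · simp [hxz]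
  -- expansion in eigenbasis
  have hexp : ∀ (f : Fin n → ℝ) (x : Fin n),
      f x = ∑ i, (∑ z, f z * v i z * μ z) * v i x := by
    intro f x
    have h1 : ∑ i, (∑ z, f z * v i z * μ z) * v i x
        = ∑ z, f z * (∑ i, v i x * v i z * μ z) := by
      simp only [Finset.sum_mul, Finset.mul_sum]
      rw [Finset.sum_comm]
      exact Finset.sum_congr rfl fun z _ => Finset.sum_congr rfl fun i _ => by ring
    rw [h1, Finset.sum_congr rfl (fun z _ => by rw [hcomp x z])]
    simp
  -- self-adjointness of L
  have hswap : ∀ F : Fin n → Fin n → ℝ,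
      (∑ x, ∑ j, w x j * F x j) = ∑ x, ∑ j, w x j * F j x := by
    intro F
    rw [Finset.sum_comm]
    exact Finset.sum_congr rfl fun x _ => Finset.sum_congr rfl fun j _ => by rw [hsym]
  have hstep : ∀ f g : Fin n → ℝ, (∑ x, L f x * g x * μ x)
      = (∑ x, ∑ j, w x j * (f x * g x)) - ∑ x, ∑ j, w x j * (f j * g x) := by
    intro f g
    rw [← Finset.sum_sub_distrib]
    refine Finset.sum_congr rfl fun x _ => ?_
    rw [hL, ← Finset.sum_sub_distrib]
    have hμx : μ x ≠ 0 := ne_of_gt (hμ x)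
    rw [show (1 / μ x) * (∑ j, w x j * (f x - f j)) * g x * μ x
        = (∑ j, w x j * (f x - f j)) * g x * ((1/μ x) * μ x) by ring,
      one_div_mul_cancel hμx, mul_one, Finset.sum_mul]
    exact Finset.sum_congr rfl fun j _ => by ring
  have hLsym : ∀ f g : Fin n → ℝ,
      (∑ x, L f x * g x * μ x) = ∑ x, f x * L g x * μ x := by
    intro f g
    have h1 : (∑ x, f x * L g x * μ x) = ∑ x, L g x * f x * μ x :=
      Finset.sum_congr rfl fun x _ => by ring
    have h2 : (∑ x, ∑ j, w x j * (g x * f x)) = ∑ x, ∑ j, w x j * (f x * g x) :=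
      Finset.sum_congr rfl fun x _ => Finset.sum_congr rfl fun j _ => by ring
    have h3 : (∑ x, ∑ j, w x j * (f j * g x)) = ∑ x, ∑ j, w x j * (f x * g j) :=
      hswap (fun a b => f b * g a)
    have h4 : (∑ x, ∑ j, w x j * (g j * f x)) = ∑ x, ∑ j, w x j * (f x * g j) :=
      Finset.sum_congr rfl fun x _ => Finset.sum_congr rfl fun j _ => by ring
    rw [h1, hstep f g, hstep g f, h2, h3, h4]
  -- linearity of L
  have hLlin : ∀ (f g : Fin n → ℝ) (a : ℝ) (x : Fin n),
      L (fun z => f z - a * g z) x = L f x - a * L g x := by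
    intro f g a x
    have hs : (∑ j, w x j * ((f x - a * g x) - (f j - a * g j)))
        = (∑ j, w x j * (f x - f j)) - a * ∑ j, w x j * (g x - g j) := by
      rw [Finset.mul_sum, ← Finset.sum_sub_distrib]
      exact Finset.sum_congr rfl fun j _ => by ring
    simp only [hL]
    rw [hs]; ring
  -- spectral projection
  have hproj : ∀ (f : Fin n → ℝ) (i : Fin n),
      (∑ x, L f x * v i x * μ x) = ρ i * ∑ x, f x * v i x * μ x := by
    intro f i
    rw [hLsym f (v i), Finset.mul_sum]
    exact Finset.sum_congr rfl fun x _ => by rw [heig]; ring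
  -- the equation satisfied by T
  have hLT : ∀ y x, L (fun z => T z y) x = c * (1 - m y y * e y x) := by
    intro y x
    have h1 : L (fun z => T z y) x = L (fun z => m z y) x - m y y * L (e y) x := by
      have hfe : (fun z => T z y) = fun z => m z y - m y y * e y z := by
        funext z; rw [hT]
      rw [hfe]; exact hLlin (fun z => m z y) (e y) (m y y) x
    have h2 := hm x y
    rw [hS, hS] at h2
    rw [h1]
    field_simp at h2
    linarith [h2]
  have hey : ∀ (y i : Fin n), (∑ x, e y x * v i x * μ x) = v i y * μ y := by
    intro y i
    rw [Finset.sum_congr rfl (fun x _ => by rw [he])]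
    simp
  have h1v : ∀ i, (∑ x, v i x * μ x)
      = Real.sqrt volV * (if i = i0 then 1 else 0) := by
    intro i
    have h1 : ∀ x, v i x * μ x = Real.sqrt volV * (v i x * v i0 x * μ x) := by
      intro x; rw [hv0 x]; field_simp
    rw [Finset.sum_congr rfl (fun x _ => h1 x), ← Finset.mul_sum, horth]
  have hcoef : ∀ y i, ρ i * (∑ x, T x y * v i x * μ x)
      = c * (Real.sqrt volV * (if i = i0 then 1 else 0) - m y y * (v i y * μ y)) := by
    intro y i
    rw [← hproj (fun z => T z y) i]
    have h1 : ∀ x, L (fun z => T z y) x * v i x * μ x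
        = c * (v i x * μ x) - c * m y y * (e y x * v i x * μ x) := by
      intro x; rw [hLT]; ring
    rw [Finset.sum_congr rfl (fun x _ => h1 x), Finset.sum_sub_distrib,
        ← Finset.mul_sum, ← Finset.mul_sum, hey, h1v]
    ring
  -- first conclusion
  have hmyy : ∀ y, m y y * μ y = volV := by
    intro y
    have h := hcoef y i0
    rw [hρ0, zero_mul, if_pos rfl, mul_one, hv0 y] at h
    have h2 : Real.sqrt volV - m y y * (1 / Real.sqrt volV * μ y) = 0 := by
      rcases mul_eq_zero.mp h.symm with h' | h'
      · exact absurd h' hc'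
      · linarith
    field_simp at h2
    linarith [Real.sq_sqrt hvolpos.le]
  -- coefficients for i ≠ i0
  have ha : ∀ y i, i ≠ i0 → (∑ x, T x y * v i x * μ x)
      = -(c * volV * v i y) / ρ i := by
    intro y i hi
    have hρ : ρ i ≠ 0 := ne_of_gt (hρpos i hi)
    have h := hcoef y i
    rw [if_neg hi, mul_zero, zero_sub,
      show m y y * (v i y * μ y) = (m y y * μ y) * v i y by ring, hmyy y] at h
    rw [eq_div_iff hρ]
    linarith [h]
  have hT0 : ∀ y, T y y = 0 := by
    intro y; rw [hT, he]; simp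
  have hexpT : ∀ x y, T x y
      = (∑ i ∈ Finset.univ \ {i0}, (-(c * volV * v i y) / ρ i) * v i x)
        + (∑ z, T z y * v i0 z * μ z) * (1 / Real.sqrt volV) := by
    intro x y
    rw [hexp (fun z => T z y) x,
      Finset.sum_eq_sum_sdiff_singleton_add (Finset.mem_univ i0)]
    congr 1
    · refine Finset.sum_congr rfl fun i hi => ?_
      have hi' : i ≠ i0 := by
        simp only [Finset.mem_sdiff, Finset.mem_singleton] at hi; exact hi.2
      rw [ha y i hi']
    · rw [hv0 x]
  have hB : ∀ y, (∑ z, T z y * v i0 z * μ z) * (1 / Real.sqrt volV)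
      = ∑ i ∈ Finset.univ \ {i0}, (c * volV * v i y * v i y) / ρ i := by
    intro y
    have h := hexpT y y
    rw [hT0 y] at h
    have h1 : (∑ i ∈ Finset.univ \ {i0}, (-(c * volV * v i y) / ρ i) * v i y)
        = -∑ i ∈ Finset.univ \ {i0}, (c * volV * v i y * v i y) / ρ i := by
      rw [← Finset.sum_neg_distrib]
      exact Finset.sum_congr rfl fun i _ => by ring
    rw [h1] at h
    linarith [h]
  refine ⟨hmyy, fun x y => ?_⟩
  have hfin : T x y + T y x
      = ∑ i ∈ Finset.univ \ {i0}, ((1 / ρ i) * (v i y - v i x) ^ 2) * (c * volV) := by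
    rw [hexpT x y, hexpT y x, hB y, hB x,
      ← Finset.sum_add_distrib, ← Finset.sum_add_distrib, ← Finset.sum_add_distrib]
    exact Finset.sum_congr rfl fun i _ => by ring
  rw [div_eq_iff (ne_of_gt (mul_pos hc hvolpos)), Finset.sum_mul]
  exact hfin
end
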